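/- arXiv:2310.04396 — 5 statements merged into one kernel-verified Lean document; each statement's English description precedes it below -/
import Mathlib

section
/- Let g ∈ H. For every multiindex α ∈ (ℤ_{≥0})^m and every x ∈ ℝ^m, the iterated partial derivative D^α g(x) satisfies the parameter shift rule D^α g(x) = 2^{−|α|} Σ_{𝔦 ∈ {−1,1}^{|α|}} 𝔦^{(1,…,1)} · g(x + p_{α,𝔦}). -/
open scoped Real BigOperators
open MeasureTheory Filter

noncomputable section

/-- The frequency grid `{-1,0,1}^m`. -/
def Omega (m : ℕ) : Finset (Fin m → ℤ) :=
  Fintype.piFinset fun _ => ({-1, 0, 1} : Finset ℤ)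

/-- `ω ⬝ x = Σ_j ω_j x_j`. -/
def dotZ {m : ℕ} (ω : Fin m → ℤ) (x : Fin m → ℝ) : ℝ := ∑ j, (ω j : ℝ) * x j

/-- The kernel `K(x,z) = (2π)^{-m} Σ_{ω∈{-1,0,1}^m} e^{i ω·(x-z)}` (a real number). -/
def Kker (m : ℕ) (x z : Fin m → ℝ) : ℝ :=
  ((2 * Real.pi) ^ m)⁻¹ *
    (∑ ω ∈ Omega m, Complex.exp (Complex.I * (dotZ ω (x - z) : ℝ))).re

/-- `K_x = K(x, ·)`. -/
def Kfun (m : ℕ) (x : Fin m → ℝ) : (Fin m → ℝ) → ℝ := fun z => Kker m x z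

/-- The space `H` of real functions of the form `Σ_{ω∈{-1,0,1}^m} c_ω e^{i ω·z}`
with `c_{-ω} = conj (c_ω)`. -/
def Hset (m : ℕ) : Set ((Fin m → ℝ) → ℝ) :=
  { g | ∃ c : (Fin m → ℤ) → ℂ,
      (∀ ω, c (-ω) = starRingEnd ℂ (c ω)) ∧
      ∀ z, (g z : ℂ) = ∑ ω ∈ Omega m, c ω * Complex.exp (Complex.I * (dotZ ω z : ℝ)) }

/-- The cube `[-π,π]^m`. -/
def box (m : ℕ) : Set (Fin m → ℝ) := Set.univ.pi fun _ => Set.Icc (-Real.pi) Real.pi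

/-- Inner product `⟨g₁,g₂⟩_H = ∫_{[-π,π]^m} g₁ g₂`. -/
def innerH (m : ℕ) (g₁ g₂ : (Fin m → ℝ) → ℝ) : ℝ := ∫ z in box m, g₁ z * g₂ z

/-- Partial derivative in direction `j`. -/
def partialD {m : ℕ} (j : Fin m) (g : (Fin m → ℝ) → ℝ) : (Fin m → ℝ) → ℝ :=
  fun x => fderiv ℝ g x (Pi.single j 1)

/-- Iterated partial derivative `D^α`. -/
def Dmulti {m : ℕ} (α : Fin m → ℕ) (g : (Fin m → ℝ) → ℝ) : (Fin m → ℝ) → ℝ :=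
  (List.finRange m).foldr (fun j h => (partialD j)^[α j] h) g

/-- The index set `{-1,1}^{|α|}`, with entries indexed as `𝔦_{j,k}`, `j : Fin m`, `k : Fin (α j)`. -/
def ShiftSet {m : ℕ} (α : Fin m → ℕ) : Finset (∀ j : Fin m, Fin (α j) → ℤ) :=
  Fintype.piFinset fun j => Fintype.piFinset fun _ => ({-1, 1} : Finset ℤ)

/-- The product `𝔦^{(1,…,1)}` of all entries of `𝔦`. -/
def signProd {m : ℕ} (α : Fin m → ℕ) (ε : ∀ j : Fin m, Fin (α j) → ℤ) : ℝ :=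
  ∏ j, ∏ k, ((ε j k : ℤ) : ℝ)

/-- The shifted point `p_{α,𝔦}`, with `j`-th coordinate `(π/2)·((Σ_k 𝔦_{j,k}) mod 4)`,
the representative mod 4 taken in `{0,1,2,3}`. -/
def pshift {m : ℕ} (α : Fin m → ℕ) (ε : ∀ j : Fin m, Fin (α j) → ℤ) : Fin m → ℝ :=
  fun j => (Real.pi / 2) * (((∑ k, ε j k) % 4 : ℤ) : ℝ)

/-- The point of the grid `(π/2)·{-1,0,1}^m` coded by `s : Fin m → Fin 3`. -/
def pt3 (m : ℕ) (s : Fin m → Fin 3) : Fin m → ℝ :=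
  fun j => (Real.pi / 2) * (((s j : ℕ) : ℝ) - 1)

/-- The point of the grid `(π/2)·{0,1,2,3}^m` coded by `s : Fin m → Fin 4`. -/
def pt4 (m : ℕ) (s : Fin m → Fin 4) : Fin m → ℝ :=
  fun j => (Real.pi / 2) * ((s j : ℕ) : ℝ)

/-- The grid `(π/2)·{-1,0,1}^m ⊆ ℝ^m`. -/
def grid3 (m : ℕ) : Set (Fin m → ℝ) := Set.range (pt3 m)

/-- The grid `(π/2)·{0,1,2,3}^m ⊆ ℝ^m`. -/
def grid4 (m : ℕ) : Set (Fin m → ℝ) := Set.range (pt4 m)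

/-- `I_d`: points of `ℝ^m` with at most `d` nonzero coordinates. -/
def Iset (m d : ℕ) : Set (Fin m → ℝ) := { z | Set.ncard { j : Fin m | z j ≠ 0 } ≤ d }

/-- Multiindices `α ∈ (ℤ_{≥0})^m` with `|α| ≤ L`, as a finset. -/
def multiIdx (m L : ℕ) : Finset (Fin m → ℕ) :=
  (Fintype.piFinset fun _ : Fin m => Finset.range (L + 1)).filter fun α => ∑ j, α j ≤ L

/-- The sup norm `‖g‖_∞ = sup_z |g(z)|`. -/
def supNorm (m : ℕ) (g : (Fin m → ℝ) → ℝ) : ℝ := ⨆ z : Fin m → ℝ, |g z|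

/-- The norm `‖g‖_H = √⟨g,g⟩_H`. -/
def normH (m : ℕ) (g : (Fin m → ℝ) → ℝ) : ℝ := Real.sqrt (innerH m g g)

end

/-!
Writing `g = Re Σ_ω c_ω e^{iω·z}`, each `∂_j` multiplies `c_ω` by `iω_j`, so
`D^α g(x) = Re Σ_ω (∏_j (iω_j)^{α_j}) c_ω e^{iω·x}`. On the other side, `e^{iω·p_{α,𝔦}}` factors
over the entries of `𝔦` (the reduction mod 4 is invisible since `k ↦ e^{iω_jπk/2}` has period 4),
so the signed sum over `𝔦` splits into the sums `Σ_{e=±1} e·e^{iω_jπe/2} = 2i sin(ω_jπ/2)`,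
which equal `2iω_j` exactly because `ω_j ∈ {-1,0,1}`.
-/

open Complex Finset

theorem dotZ_add {m : ℕ} (ω : Fin m → ℤ) (x y : Fin m → ℝ) :
    dotZ ω (x + y) = dotZ ω x + dotZ ω y := by
  simp only [dotZ, Pi.add_apply, mul_add, sum_add_distrib]

theorem hasFDerivAt_dotZ {m : ℕ} (ω : Fin m → ℤ) (x : Fin m → ℝ) :
    HasFDerivAt (dotZ ω) (∑ j, (ω j : ℝ) • ContinuousLinearMap.proj j : (Fin m → ℝ) →L[ℝ] ℝ) x :=
  HasFDerivAt.fun_sum fun j _ => (hasFDerivAt_apply j x).const_mul _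

noncomputable def trigSum {m : ℕ} (s : Finset (Fin m → ℤ)) (c : (Fin m → ℤ) → ℂ) :
    (Fin m → ℝ) → ℝ :=
  fun z => (∑ ω ∈ s, c ω * exp (I * dotZ ω z)).re

section Derivatives

variable {m : ℕ} (s : Finset (Fin m → ℤ)) (c : (Fin m → ℤ) → ℂ)

theorem partialD_trigSum (j : Fin m) :
    partialD j (trigSum s c) = trigSum s (fun ω => I * ω j * c ω) := by
  funext x
  have hderiv : HasFDerivAt (trigSum s c) _ x := reCLM.hasFDerivAt.comp x <|
    HasFDerivAt.fun_sum fun ω (_ : ω ∈ s) =>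
      (((ofRealCLM.hasFDerivAt.comp x (hasFDerivAt_dotZ ω x)).const_mul I).cexp).const_mul (c ω)
  rw [partialD, hderiv.fderiv]
  simp only [trigSum, ContinuousLinearMap.comp_apply, reCLM_apply, FunLike.coe_sum,
    Finset.sum_apply]
  congr 1
  refine sum_congr rfl fun ω _ => ?_
  simp only [ContinuousLinearMap.comp_apply, Function.comp_apply, ofRealCLM_apply,
    _root_.smul_apply, _root_.sum_apply, ContinuousLinearMap.proj_apply,
    Pi.single_apply, smul_eq_mul, mul_ite, mul_one, mul_zero, sum_ite_eq', mem_univ, if_true,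
    ofReal_intCast]
  ring

theorem iterate_partialD_trigSum (j : Fin m) (n : ℕ) :
    (partialD j)^[n] (trigSum s c) = trigSum s (fun ω => (I * ω j) ^ n * c ω) := by
  induction n with
  | zero => simp
  | succ n ih =>
    rw [Function.iterate_succ_apply', ih, partialD_trigSum]
    congr 1
    funext ω
    ring

theorem foldr_iterate_partialD_trigSum (α : Fin m → ℕ) (l : List (Fin m)) :
    l.foldr (fun j h => (partialD j)^[α j] h) (trigSum s c) =
      trigSum s (fun ω => (l.map fun j => (I * ω j) ^ α j).prod * c ω) := by
  induction l with
  | nil => simp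
  | cons j l ih =>
    rw [List.foldr_cons, ih, iterate_partialD_trigSum]
    congr 1
    funext ω
    rw [List.map_cons, List.prod_cons]
    ring

theorem Dmulti_trigSum (α : Fin m → ℕ) :
    Dmulti α (trigSum s c) = trigSum s (fun ω => (∏ j, (I * ω j) ^ α j) * c ω) := by
  simp only [Dmulti, foldr_iterate_partialD_trigSum, Fin.prod_univ_def]

end Derivatives

theorem exists_eq_trigSum_of_mem_Hset {m : ℕ} {g : (Fin m → ℝ) → ℝ} (hg : g ∈ Hset m) :
    ∃ c, g = trigSum (Omega m) c := by
  obtain ⟨c, -, hc⟩ := hg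
  exact ⟨c, funext fun z => by simp [trigSum, ← hc z]⟩

theorem sum_sign_mul_exp_pi_div_two {w : ℤ} (hw : w ∈ ({-1, 0, 1} : Finset ℤ)) :
    ∑ e ∈ ({-1, 1} : Finset ℤ), (e : ℂ) * exp (I * w * (π / 2) * e) = 2 * I * w := by
  rw [sum_pair (by decide)]
  simp only [mem_insert, mem_singleton] at hw
  rcases hw with rfl | rfl | rfl <;>
    simp only [Int.cast_neg, Int.cast_one, Int.cast_zero, mul_comm I, neg_mul, one_mul, zero_mul,
      mul_neg, mul_one, exp_neg, exp_zero, exp_pi_div_two_mul_I, inv_I, neg_neg] <;>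
    ring

theorem exp_pi_div_two_mul_emod_four (w S : ℤ) :
    exp (I * w * (π / 2) * ((S % 4 : ℤ) : ℂ)) = exp (I * w * (π / 2) * S) := by
  refine exp_eq_exp_iff_exists_int.mpr ⟨-(w * (S / 4)), ?_⟩
  rw [Int.emod_def]
  push_cast
  ring

theorem sum_prod_sign_mul_exp_emod_four {w : ℤ} (hw : w ∈ ({-1, 0, 1} : Finset ℤ)) (n : ℕ) :
    ∑ v ∈ Fintype.piFinset (fun _ : Fin n => ({-1, 1} : Finset ℤ)),
        (∏ k, (v k : ℂ)) * exp (I * w * (π / 2) * (((∑ k, v k) % 4 : ℤ) : ℂ)) =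
      (2 * I * w) ^ n := by
  calc _ = ∑ v ∈ Fintype.piFinset (fun _ : Fin n => ({-1, 1} : Finset ℤ)),
        ∏ k, ((v k : ℂ) * exp (I * w * (π / 2) * v k)) := by
        refine sum_congr rfl fun v _ => ?_
        rw [exp_pi_div_two_mul_emod_four, Int.cast_sum, mul_sum, exp_sum, prod_mul_distrib]
    _ = ∏ _k : Fin n, ∑ e ∈ ({-1, 1} : Finset ℤ), (e : ℂ) * exp (I * w * (π / 2) * e) := by
        rw [prod_univ_sum]
    _ = _ := by simp [sum_sign_mul_exp_pi_div_two hw]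

theorem sum_signProd_mul_exp_dotZ_pshift {m : ℕ} (α : Fin m → ℕ) {ω : Fin m → ℤ}
    (hω : ω ∈ Omega m) :
    ∑ ε ∈ ShiftSet α, (signProd α ε : ℂ) * exp (I * dotZ ω (pshift α ε)) =
      2 ^ (∑ j, α j) * ∏ j, (I * ω j) ^ α j := by
  calc _ = ∑ ε ∈ ShiftSet α, ∏ j, ((∏ k, (ε j k : ℂ)) *
        exp (I * ω j * (π / 2) * (((∑ k, ε j k) % 4 : ℤ) : ℂ))) := by
        refine sum_congr rfl fun ε _ => ?_
        simp only [signProd, dotZ, pshift]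
        push_cast
        simp only [mul_sum, exp_sum, prod_mul_distrib, mul_assoc]
    _ = ∏ j, ∑ v ∈ Fintype.piFinset (fun _ : Fin (α j) => ({-1, 1} : Finset ℤ)),
        (∏ k, (v k : ℂ)) * exp (I * ω j * (π / 2) * (((∑ k, v k) % 4 : ℤ) : ℂ)) := by
        rw [prod_univ_sum, ShiftSet]
    _ = ∏ j, (2 * I * ω j) ^ α j :=
        prod_congr rfl fun j _ => sum_prod_sign_mul_exp_emod_four (Fintype.mem_piFinset.mp hω j) _
    _ = _ := by simp only [mul_assoc, mul_pow, prod_mul_distrib, prod_pow_eq_pow_sum]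

theorem sum_signProd_mul_trigSum_add_pshift {m : ℕ} (α : Fin m → ℕ) (c : (Fin m → ℤ) → ℂ)
    (x : Fin m → ℝ) :
    ∑ ε ∈ ShiftSet α, signProd α ε * trigSum (Omega m) c (x + pshift α ε) =
      2 ^ (∑ j, α j) * trigSum (Omega m) (fun ω => (∏ j, (I * ω j) ^ α j) * c ω) x := by
  have key : ∑ ε ∈ ShiftSet α, (signProd α ε : ℂ) *
        ∑ ω ∈ Omega m, c ω * exp (I * dotZ ω (x + pshift α ε)) =
      ((2 ^ (∑ j, α j) : ℝ) : ℂ) *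
        ∑ ω ∈ Omega m, (∏ j, (I * ω j) ^ α j) * c ω * exp (I * dotZ ω x) :=
    calc _ = ∑ ω ∈ Omega m, c ω * exp (I * dotZ ω x) *
          ∑ ε ∈ ShiftSet α, (signProd α ε : ℂ) * exp (I * dotZ ω (pshift α ε)) := by
          simp only [mul_sum]
          rw [sum_comm]
          refine sum_congr rfl fun ω _ => sum_congr rfl fun ε _ => ?_
          rw [dotZ_add, ofReal_add, mul_add, exp_add]
          ring
      _ = _ := by
          rw [mul_sum]
          refine sum_congr rfl fun ω hω => ?_
          rw [sum_signProd_mul_exp_dotZ_pshift α hω]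
          push_cast
          ring
  simp only [trigSum, ← re_ofReal_mul, ← re_sum, key]

theorem parameter_shift_rule_general (m : ℕ)
    (g : (Fin m → ℝ) → ℝ) (hg : g ∈ Hset m) (α : Fin m → ℕ) (x : Fin m → ℝ) :
    Dmulti α g x =
      (1 / 2 ^ (∑ j, α j)) * ∑ ε ∈ ShiftSet α, signProd α ε * g (x + pshift α ε) := by
  obtain ⟨c, rfl⟩ := exists_eq_trigSum_of_mem_Hset hg
  rw [Dmulti_trigSum, sum_signProd_mul_trigSum_add_pshift]
  field_simp

/-- the parameter shift rule
`D^α g(x) = 2^{-|α|} Σ_{𝔦 ∈ {-1,1}^{|α|}} 𝔦^{(1,…,1)} g(x + p_{α,𝔦})`. -/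
theorem parameter_shift_rule (m : ℕ) (hm : 0 < m)
    (g : (Fin m → ℝ) → ℝ) (hg : g ∈ Hset m) (α : Fin m → ℕ) (x : Fin m → ℝ) :
    Dmulti α g x =
      (1 / 2 ^ (∑ j, α j)) * ∑ ε ∈ ShiftSet α, signProd α ε * g (x + pshift α ε) :=
  parameter_shift_rule_general m g hg α x
end

section
/- Let g ∈ H. Then for every x ∈ ℝ^m, g(x) = Σ_{k=0}^{∞} Σ_{α ∈ (ℤ_{≥0})^m, |α| = k} (x^α / (α!·2^{|α|})) · ( Σ_{𝔦 ∈ {−1,1}^{|α|}} 𝔦^{(1,…,1)} · g(p_{α,𝔦}) ), where x^α = x₁^{α₁}⋯x_m^{α_m} and α! = α₁!⋯α_m!, and the outer series converges to g(x). -/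
open scoped Real BigOperators
open MeasureTheory Filter

/-!
Both sides are linear in `g`, so it suffices to treat one frequency `z ↦ e^{iω·z}` with
`ω ∈ {-1,0,1}^m`. Since `e^{iω_j(π/2)n} = i^{ω_j n}`, the reduction mod 4 in `p_{α,𝔦}` is
harmless and the shift sum factors into the one-dimensional sums `Σ_{e=±1} e·i^{ω_j e} = 2iω_j`
(this is where `ω_j ∈ {-1,0,1}` enters), so it equals `2^{|α|}(iω)^α`. By the multinomial
theorem the degree-`k` block of the series is then `(iω·x)^k/k!`, the `k`-th term of the
exponential series of `e^{iω·x}`.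
-/

open Complex Finset

lemma cexp_int_mul_pi_div_two_mul_I (n : ℤ) : cexp (n * (π / 2 * I)) = I ^ n := by
  rw [exp_int_mul, exp_pi_div_two_mul_I]

lemma cexp_int_mul_pi_div_two_mul_I_eq_of_modEq {a b : ℤ} (h : a ≡ b [ZMOD 4]) :
    cexp (a * (π / 2 * I)) = cexp (b * (π / 2 * I)) := by
  rw [cexp_int_mul_pi_div_two_mul_I, cexp_int_mul_pi_div_two_mul_I, I_zpow_eq_zpow_mod a,
    I_zpow_eq_zpow_mod b, h.eq]

lemma sum_sign_mul_cexp_int_mul_pi_div_two_mul_I {w : ℤ} (hw : w ∈ ({-1, 0, 1} : Finset ℤ)) :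
    ∑ e ∈ ({-1, 1} : Finset ℤ), (e : ℂ) * cexp ((w * e : ℤ) * (π / 2 * I)) = 2 * I * w := by
  simp only [cexp_int_mul_pi_div_two_mul_I, sum_pair (show (-1 : ℤ) ≠ 1 by decide)]
  fin_cases hw <;> simp <;> ring

lemma cexp_I_mul_dotZ_pshift {m : ℕ} (ω : Fin m → ℤ) (α : Fin m → ℕ)
    (ε : ∀ j : Fin m, Fin (α j) → ℤ) :
    cexp (I * dotZ ω (pshift α ε)) = ∏ j, ∏ k, cexp ((ω j * ε j k : ℤ) * (π / 2 * I)) := by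
  have hdot : I * dotZ ω (pshift α ε) = ∑ j, (ω j * ((∑ k, ε j k) % 4) : ℤ) * (π / 2 * I) := by
    simp only [dotZ, pshift]
    push_cast
    rw [mul_sum]
    exact sum_congr rfl fun j _ => by ring
  rw [hdot, exp_sum]
  refine prod_congr rfl fun j _ => ?_
  rw [cexp_int_mul_pi_div_two_mul_I_eq_of_modEq ((Int.mod_modEq _ 4).mul_left (ω j)), ← exp_sum]
  push_cast
  rw [mul_sum, sum_mul]

lemma sum_signProd_mul_cexp_dotZ_pshift {m : ℕ} {ω : Fin m → ℤ} (hω : ω ∈ Omega m)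
    (α : Fin m → ℕ) :
    ∑ ε ∈ ShiftSet α, (signProd α ε : ℂ) * cexp (I * dotZ ω (pshift α ε)) =
      ∏ j, (2 * I * ω j) ^ α j := by
  let atom (j : Fin m) (e : ℤ) : ℂ := e * cexp ((ω j * e : ℤ) * (π / 2 * I))
  have hterm : ∀ ε, (signProd α ε : ℂ) * cexp (I * dotZ ω (pshift α ε)) =
      ∏ j, ∏ k, atom j (ε j k) := by
    intro ε
    simp only [atom, signProd, cexp_I_mul_dotZ_pshift, prod_mul_distrib]
    push_cast
    rfl
  rw [sum_congr rfl fun ε _ => hterm ε, ShiftSet,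
    ← prod_univ_sum _ fun j (y : Fin (α j) → ℤ) => ∏ k, atom j (y k)]
  refine prod_congr rfl fun j _ => ?_
  rw [← prod_univ_sum (fun _ => {-1, 1}) fun _ => atom j, prod_const, card_univ,
    Fintype.card_fin, sum_sign_mul_cexp_int_mul_pi_div_two_mul_I (Fintype.mem_piFinset.mp hω j)]

lemma filter_piFinset_range_sum_eq_piAntidiag (m k : ℕ) :
    (Fintype.piFinset fun _ : Fin m => range (k + 1)).filter (fun α => ∑ j, α j = k) =
      piAntidiag univ k := by
  ext α
  simp only [mem_filter, Fintype.mem_piFinset, mem_range, mem_piAntidiag, mem_univ,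
    implies_true, and_true, and_iff_right_iff_imp]
  rintro rfl j
  exact Nat.lt_succ_of_le (single_le_sum (fun _ _ => Nat.zero_le _) (mem_univ j))

open Nat in
lemma sum_piAntidiag_prod_pow_div_factorial {ι K : Type*} [DecidableEq ι] [Field K] [CharZero K]
    (s : Finset ι) (z : ι → K) (k : ℕ) :
    ∑ α ∈ piAntidiag s k, (∏ i ∈ s, z i ^ α i) / ∏ i ∈ s, ((α i)! : K) =
      (∑ i ∈ s, z i) ^ k / k ! := by
  rw [sum_pow_eq_sum_piAntidiag, sum_div]
  refine sum_congr rfl fun α hα => ?_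
  have hfac : ((∏ i ∈ s, (α i)! : ℕ) : K) * multinomial s α = k ! := by
    rw [← (mem_piAntidiag.mp hα).1]
    exact_mod_cast multinomial_spec s α
  have hmul : (multinomial s α : K) ≠ 0 := Nat.cast_ne_zero.2 (multinomial_pos s α).ne'
  push_cast at hfac
  rw [← hfac]
  field_simp

lemma sum_piAntidiag_shift_coeff_mul {m : ℕ} (x : Fin m → ℝ) (y : Fin m → ℂ) (k : ℕ) :
    ∑ α ∈ piAntidiag univ k,
      (((∏ j, x j ^ α j) / (((∏ j, Nat.factorial (α j) : ℕ) : ℝ) * 2 ^ (∑ j, α j)) : ℝ) : ℂ) *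
        ∏ j, (2 * y j) ^ α j =
      (∑ j, x j * y j) ^ k / k.factorial := by
  rw [← sum_piAntidiag_prod_pow_div_factorial]
  refine sum_congr rfl fun α _ => ?_
  simp only [mul_pow, prod_mul_distrib, prod_pow_eq_pow_sum]
  push_cast
  field_simp

lemma hasSum_shift_series_cexp_dotZ {m : ℕ} (ω : Fin m → ℤ) (x : Fin m → ℝ) :
    HasSum (fun k => ∑ α ∈ piAntidiag univ k,
      (((∏ j, x j ^ α j) / (((∏ j, Nat.factorial (α j) : ℕ) : ℝ) * 2 ^ (∑ j, α j)) : ℝ) : ℂ) *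
        ∏ j, (2 * I * ω j) ^ α j) (cexp (I * dotZ ω x)) := by
  have hdot : ∑ j, x j * (I * ω j) = I * dotZ ω x := by
    simp only [dotZ, ofReal_sum, ofReal_mul, ofReal_intCast, mul_sum]
    exact sum_congr rfl fun j _ => by ring
  simp only [mul_assoc 2 I, sum_piAntidiag_shift_coeff_mul, hdot, exp_eq_exp_ℂ]
  exact NormedSpace.expSeries_div_hasSum_exp _

lemma ofReal_sum_signProd_mul_pshift {m : ℕ} {g : (Fin m → ℝ) → ℝ} {c : (Fin m → ℤ) → ℂ}
    (hgc : ∀ z, (g z : ℂ) = ∑ ω ∈ Omega m, c ω * cexp (I * dotZ ω z)) (α : Fin m → ℕ) :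
    ((∑ ε ∈ ShiftSet α, signProd α ε * g (pshift α ε) : ℝ) : ℂ) =
      ∑ ω ∈ Omega m, c ω * ∏ j, (2 * I * ω j) ^ α j := by
  simp only [ofReal_sum, ofReal_mul, hgc, mul_sum]
  rw [sum_comm]
  refine sum_congr rfl fun ω hω => ?_
  rw [← sum_signProd_mul_cexp_dotZ_pshift hω, mul_sum]
  exact sum_congr rfl fun ε _ => by ring

lemma hasSum_shift_series {m : ℕ} {g : (Fin m → ℝ) → ℝ} (hg : g ∈ Hset m) (x : Fin m → ℝ) :
    HasSum (fun k => ∑ α ∈ piAntidiag univ k,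
      ((∏ j, x j ^ α j) / (((∏ j, Nat.factorial (α j) : ℕ) : ℝ) * 2 ^ (∑ j, α j))) *
        ∑ ε ∈ ShiftSet α, signProd α ε * g (pshift α ε)) (g x) := by
  obtain ⟨c, -, hgc⟩ := hg
  have hterm : ∀ k, ((∑ α ∈ piAntidiag univ k,
      ((∏ j, x j ^ α j) / (((∏ j, Nat.factorial (α j) : ℕ) : ℝ) * 2 ^ (∑ j, α j))) *
        ∑ ε ∈ ShiftSet α, signProd α ε * g (pshift α ε) : ℝ) : ℂ) =
      ∑ ω ∈ Omega m, c ω * ∑ α ∈ piAntidiag univ k,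
        (((∏ j, x j ^ α j) / (((∏ j, Nat.factorial (α j) : ℕ) : ℝ) * 2 ^ (∑ j, α j)) : ℝ) : ℂ) *
          ∏ j, (2 * I * ω j) ^ α j := by
    intro k
    rw [ofReal_sum]
    simp only [ofReal_mul, ofReal_sum_signProd_mul_pshift hgc]
    simp only [mul_sum]
    rw [sum_comm]
    exact sum_congr rfl fun ω _ => sum_congr rfl fun α _ => by ring
  rw [← hasSum_ofReal, funext hterm, hgc]
  exact hasSum_sum fun ω _ => (hasSum_shift_series_cexp_dotZ ω x).mul_left (c ω)

theorem series_expansion_via_shifts_general (m : ℕ)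
    (g : (Fin m → ℝ) → ℝ) (hg : g ∈ Hset m) (x : Fin m → ℝ) :
    Filter.Tendsto
      (fun N : ℕ => ∑ k ∈ Finset.range N,
        ∑ α ∈ (Fintype.piFinset fun _ : Fin m => Finset.range (k + 1)).filter
            (fun α => ∑ j, α j = k),
          ((∏ j, x j ^ α j) / (((∏ j, Nat.factorial (α j) : ℕ) : ℝ) * 2 ^ (∑ j, α j))) *
            ∑ ε ∈ ShiftSet α, signProd α ε * g (pshift α ε))
      Filter.atTop (nhds (g x)) := by
  simp only [filter_piFinset_range_sum_eq_piAntidiag]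
  exact (hasSum_shift_series hg x).tendsto_sum_nat

/-- the power series expansion of `g` via parameter shift values converges:
`g(x) = Σ_{k=0}^∞ Σ_{|α| = k} (x^α/(α! 2^{|α|})) Σ_{𝔦∈{-1,1}^{|α|}} 𝔦^{(1,…,1)} g(p_{α,𝔦})`. -/
theorem series_expansion_via_shifts (m : ℕ) (hm : 0 < m)
    (g : (Fin m → ℝ) → ℝ) (hg : g ∈ Hset m) (x : Fin m → ℝ) :
    Filter.Tendsto
      (fun N : ℕ => ∑ k ∈ Finset.range N,
        ∑ α ∈ (Fintype.piFinset fun _ : Fin m => Finset.range (k + 1)).filter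
            (fun α => ∑ j, α j = k),
          ((∏ j, x j ^ α j) / (((∏ j, Nat.factorial (α j) : ℕ) : ℝ) * 2 ^ (∑ j, α j))) *
            ∑ ε ∈ ShiftSet α, signProd α ε * g (pshift α ε))
      Filter.atTop (nhds (g x)) :=
  series_expansion_via_shifts_general m g hg x
end

section
/- Let D ∈ ℤ_{≥1}, let p₁, …, p_D ∈ ℝ^m, and let g ∈ H. Then the linear system of equations (K(p_i, p_j))_{1≤i,j≤D} · η = (g(p₁), …, g(p_D))ᵀ, with unknown η ∈ ℝ^D, has at least one solution. -/
open scoped Real BigOperators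
open MeasureTheory Filter

/-!
The kernel matrix factors as `(K(p_i,p_j)) = (2π)^{-m} A Aᵀ`, where the row of `A` at `p_i` lists
`cos (ω·p_i)` and `sin (ω·p_i)` for `ω ∈ {-1,0,1}^m` (by `cos (a - b) = cos a cos b + sin a sin b`).
Taking real parts, `g(p_i)` is a real combination of the same functions, so the right-hand side
lies in the range of `A`. Over an ordered field `A Aᵀ` has the same rank as `A`, hence the same
range, and the system is solvable.
-/

namespace Matrix

variable {R n k : Type*} [Field R] [LinearOrder R] [IsStrictOrderedRing R] [Fintype n] [Fintype k]

theorem range_mulVecLin_mul_transpose [DecidableEq n] (A : Matrix n k R) :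
    LinearMap.range (A * Aᵀ).mulVecLin = LinearMap.range A.mulVecLin := by
  apply Submodule.eq_of_le_of_finrank_le
  · rw [mulVecLin_mul]
    exact LinearMap.range_comp_le_range _ _
  · exact (rank_self_mul_transpose A).ge

theorem exists_mul_transpose_mulVec_eq (A : Matrix n k R) (w : k → R) :
    ∃ η, (A * Aᵀ) *ᵥ η = A *ᵥ w := by
  classical
  have hmem : A *ᵥ w ∈ LinearMap.range (A * Aᵀ).mulVecLin := by
    rw [range_mulVecLin_mul_transpose]
    exact ⟨w, rfl⟩
  exact hmem

end Matrix

open Matrix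

lemma dotZ_sub {m : ℕ} (ω : Fin m → ℤ) (x z : Fin m → ℝ) :
    dotZ ω (x - z) = dotZ ω x - dotZ ω z := by
  simp [dotZ, mul_sub, Finset.sum_sub_distrib]

lemma Kker_eq_sum_cos (m : ℕ) (x z : Fin m → ℝ) :
    Kker m x z = ((2 * π) ^ m)⁻¹ * ∑ ω ∈ Omega m, Real.cos (dotZ ω (x - z)) := by
  rw [Kker, Complex.re_sum]
  congr 1
  refine Finset.sum_congr rfl fun ω _ => ?_
  rw [mul_comm, Complex.exp_ofReal_mul_I_re]

section TrigFeatures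

variable {ι : Type*} {m : ℕ} (S : Finset (Fin m → ℤ)) (p : ι → Fin m → ℝ)

/-- Row `i` lists `cos (ω·p_i)` (at `(ω, true)`) and `sin (ω·p_i)` (at `(ω, false)`), `ω ∈ S`. -/
noncomputable def trigFeatures : Matrix ι (S × Bool) ℝ :=
  of fun i x => if x.2 then Real.cos (dotZ x.1 (p i)) else Real.sin (dotZ x.1 (p i))

lemma trigFeatures_mul_transpose_apply (i j : ι) :
    (trigFeatures S p * (trigFeatures S p)ᵀ) i j = ∑ ω ∈ S, Real.cos (dotZ ω (p i - p j)) := by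
  rw [mul_apply, Fintype.sum_prod_type, ← Finset.sum_coe_sort S]
  refine Finset.sum_congr rfl fun ω _ => ?_
  simp only [Fintype.sum_bool, trigFeatures, of_apply, transpose_apply, if_true, if_false,
    Bool.false_eq_true, dotZ_sub, Real.cos_sub]

lemma re_sum_mul_exp_eq_trigFeatures_mulVec (c : (Fin m → ℤ) → ℂ) (i : ι) :
    (∑ ω ∈ S, c ω * Complex.exp (Complex.I * (dotZ ω (p i) : ℝ))).re =
      (trigFeatures S p *ᵥ fun x => if x.2 then (c x.1).re else -(c x.1).im) i := by
  rw [Complex.re_sum, mulVec, dotProduct, Fintype.sum_prod_type, ← Finset.sum_coe_sort S]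
  refine Finset.sum_congr rfl fun ω _ => ?_
  simp only [Fintype.sum_bool, trigFeatures, of_apply, if_true, if_false, Bool.false_eq_true]
  rw [mul_comm Complex.I, Complex.exp_mul_I]
  simp only [Complex.mul_re, Complex.add_re, Complex.cos_ofReal_re, Complex.sin_ofReal_re,
    Complex.I_re, mul_zero, Complex.sin_ofReal_im, Complex.I_im, mul_one, sub_self, add_zero,
    Complex.add_im, Complex.cos_ofReal_im, Complex.mul_im, zero_add, mul_neg]
  ring

end TrigFeatures

lemma kernelMatrix_eq_smul_trigFeatures_mul_transpose {ι : Type*} (m : ℕ) (p : ι → Fin m → ℝ) :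
    (of fun i j => Kker m (p i) (p j)) =
      ((2 * π) ^ m)⁻¹ • (trigFeatures (Omega m) p * (trigFeatures (Omega m) p)ᵀ) := by
  ext i j
  simp only [of_apply, Matrix.smul_apply, smul_eq_mul, Kker_eq_sum_cos,
    trigFeatures_mul_transpose_apply]

theorem interpolation_system_solvable_general (m : ℕ) (D : ℕ)
    (p : Fin D → (Fin m → ℝ)) (g : (Fin m → ℝ) → ℝ) (hg : g ∈ Hset m) :
    ∃ η : Fin D → ℝ,
      (Matrix.of fun i j => Kker m (p i) (p j)).mulVec η = fun i => g (p i) := by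
  obtain ⟨c, -, hgc⟩ := hg
  set A := trigFeatures (Omega m) p
  have hrhs : (fun i => g (p i)) = A *ᵥ fun x => if x.2 then (c x.1).re else -(c x.1).im := by
    funext i
    rw [← re_sum_mul_exp_eq_trigFeatures_mulVec, ← hgc, Complex.ofReal_re]
  obtain ⟨η, hη⟩ := exists_mul_transpose_mulVec_eq A _
  have hscale : ((2 * π) ^ m : ℝ) ≠ 0 := by positivity
  refine ⟨((2 * π) ^ m) • η, ?_⟩
  rw [kernelMatrix_eq_smul_trigFeatures_mul_transpose, smul_mulVec, mulVec_smul, smul_smul,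
    inv_mul_cancel₀ hscale, one_smul, hη, hrhs]

/-- the linear system `(K(p_i,p_j))·η = (g(p₁),…,g(p_D))ᵀ`
has at least one solution. -/
theorem interpolation_system_solvable (m : ℕ) (hm : 0 < m) (D : ℕ) (hD : 1 ≤ D)
    (p : Fin D → (Fin m → ℝ)) (g : (Fin m → ℝ) → ℝ) (hg : g ∈ Hset m) :
    ∃ η : Fin D → ℝ,
      (Matrix.of fun i j => Kker m (p i) (p j)).mulVec η = fun i => g (p i) :=
  interpolation_system_solvable_general m D p g hg
end

section
/- Let d ∈ {0, 1, …, m} and let I_d = {z ∈ ℝ^m : at most d coordinates of z are nonzero}. Then for every p ∈ ((π/2)·{0,1,2,3}^m) ∩ I_d, the function K_p lies in span_ℝ{ K_q : q ∈ ((π/2)·{−1,0,1}^m) ∩ I_d }. -/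
open scoped Real BigOperators
open MeasureTheory Filter

noncomputable section

/-!
The kernel factorises as `K(x, z) = (2π)^{-m} ∏ⱼ (1 + 2 cos (xⱼ - zⱼ))`, so it suffices to move
one coordinate of `p` at a time into `(π/2)·{-1,0,1}`. In one variable, `3π/2 ≡ -π/2 (mod 2π)`
and `1 + 2 cos (π - u) = (1 + 2 cos (π/2 - u)) + (1 + 2 cos (-π/2 - u)) - (1 + 2 cos u)`.
Neither move creates a new nonzero coordinate, since the coordinate moved was `π` or `3π/2`,
so the points stay in `I_d`.
-/

open Real Function

lemma sum_exp_I_mul_eq_one_add_two_cos (y : ℝ) :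
    ∑ n ∈ ({-1, 0, 1} : Finset ℤ), Complex.exp (Complex.I * ((n : ℝ) * y : ℝ)) =
      ((1 + 2 * cos y : ℝ) : ℂ) := by
  rw [Finset.sum_insert (by decide), Finset.sum_pair (by decide)]
  push_cast
  simp only [neg_one_mul, one_mul, zero_mul, mul_zero, mul_neg, Complex.exp_zero, Complex.cos]
  ring_nf

lemma Kker_eq_prod (m : ℕ) (x z : Fin m → ℝ) :
    Kker m x z = ((2 * π) ^ m)⁻¹ * ∏ j, (1 + 2 * cos (x j - z j)) := by
  have hexp (ω : Fin m → ℤ) : Complex.exp (Complex.I * (dotZ ω (x - z) : ℝ)) =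
      ∏ j, Complex.exp (Complex.I * ((ω j : ℝ) * (x j - z j) : ℝ)) := by
    simp only [dotZ, Pi.sub_apply, Complex.ofReal_sum, Finset.mul_sum, Complex.exp_sum]
  simp only [Kker, Omega, hexp]
  rw [← Finset.prod_univ_sum (fun _ => ({-1, 0, 1} : Finset ℤ))
    (fun j (n : ℤ) => Complex.exp (Complex.I * ((n : ℝ) * (x j - z j) : ℝ)))]
  simp only [sum_exp_I_mul_eq_one_add_two_cos, ← Complex.ofReal_prod, Complex.ofReal_re]

lemma Kfun_update_apply {m : ℕ} (p : Fin m → ℝ) (j : Fin m) (t : ℝ) (z : Fin m → ℝ) :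
    Kfun m (update p j t) z = (1 + 2 * cos (t - z j)) *
      (((2 * π) ^ m)⁻¹ * ∏ k ∈ {j}ᶜ, (1 + 2 * cos (p k - z k))) := by
  rw [Kfun, Kker_eq_prod, ← Finset.prod_mul_prod_compl {j}, Finset.prod_singleton,
    update_self, Finset.prod_congr rfl fun k hk => by rw [update_of_ne (by simpa using hk)]]
  ring

lemma Kfun_update_pi {m : ℕ} (p : Fin m → ℝ) (j : Fin m) :
    Kfun m (update p j π) = Kfun m (update p j (π / 2)) + Kfun m (update p j (-(π / 2)))
      - Kfun m (update p j 0) := by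
  funext z
  simp only [Pi.add_apply, Pi.sub_apply, Kfun_update_apply, cos_pi_sub, cos_pi_div_two_sub,
    zero_sub, cos_neg, neg_sub_left, cos_add_pi_div_two]
  ring

lemma Kfun_update_three_pi_div_two {m : ℕ} (p : Fin m → ℝ) (j : Fin m) :
    Kfun m (update p j (π / 2 * 3)) = Kfun m (update p j (-(π / 2))) := by
  funext z
  have h : π / 2 * 3 - z j = -(π / 2) - z j + 2 * π := by ring
  simp only [Kfun_update_apply, h, cos_add_two_pi]

lemma Kfun_mem_span_update {m : ℕ} {p : Fin m → ℝ} {j : Fin m}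
    (hpj : p j = π ∨ p j = π / 2 * 3) :
    Kfun m p ∈ Submodule.span ℝ
      ((fun t => Kfun m (update p j t)) '' {-(π / 2), 0, π / 2}) := by
  have mem (t : ℝ) (ht : t ∈ ({-(π / 2), 0, π / 2} : Set ℝ)) :
      Kfun m (update p j t) ∈ Submodule.span ℝ
        ((fun t => Kfun m (update p j t)) '' {-(π / 2), 0, π / 2}) :=
    Submodule.subset_span ⟨t, ht, rfl⟩
  rcases hpj with hpj | hpj
  · rw [show Kfun m p = Kfun m (update p j π) by rw [← hpj, update_eq_self], Kfun_update_pi]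
    exact sub_mem (add_mem (mem _ (by simp)) (mem _ (by simp))) (mem _ (by simp))
  · rw [show Kfun m p = Kfun m (update p j (π / 2 * 3)) by rw [← hpj, update_eq_self],
      Kfun_update_three_pi_div_two]
    exact mem _ (by simp)

lemma update_mem_Iset {m d : ℕ} {p : Fin m → ℝ} (hp : p ∈ Iset m d) {j : Fin m}
    (hpj : p j ≠ 0) (t : ℝ) : update p j t ∈ Iset m d := by
  refine le_trans (Set.ncard_le_ncard (fun k hk => ?_) (Set.toFinite _)) hp
  rcases eq_or_ne k j with rfl | hkj
  · exact hpj
  · simpa [update_of_ne hkj] using hk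

lemma mem_grid3_of_forall {m : ℕ} {x : Fin m → ℝ}
    (hx : ∀ j, x j ∈ ({-(π / 2), 0, π / 2} : Set ℝ)) : x ∈ grid3 m := by
  have hcode (j : Fin m) : ∃ s : Fin 3, π / 2 * ((s : ℕ) - 1 : ℝ) = x j := by
    rcases hx j with h | h | h
    exacts [⟨0, by simp [h]⟩, ⟨1, by simp [h]⟩, ⟨2, by rw [h]; norm_num⟩]
  choose s hs using hcode
  exact ⟨s, funext hs⟩

lemma Kfun_mem_span_grid3_of_finset {m d : ℕ} (T : Finset (Fin m)) {p : Fin m → ℝ}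
    (hp : p ∈ Iset m d) (hout : ∀ j ∉ T, p j ∈ ({-(π / 2), 0, π / 2} : Set ℝ))
    (hin : ∀ j ∈ T, p j ∈ ({0, π / 2, π, π / 2 * 3} : Set ℝ)) :
    Kfun m p ∈ Submodule.span ℝ (Kfun m '' (grid3 m ∩ Iset m d)) := by
  induction T using Finset.induction_on generalizing p with
  | empty =>
    exact Submodule.subset_span
      ⟨p, ⟨mem_grid3_of_forall fun j => hout j (Finset.notMem_empty j), hp⟩, rfl⟩
  | insert j T hjT ih =>
    have hinT (k : Fin m) (hk : k ∈ T) := hin k (Finset.mem_insert_of_mem hk)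
    have houtT (k : Fin m) (hkT : k ∉ T) (hkj : k ≠ j) := hout k (by simp [hkT, hkj])
    obtain hpj | hpj :
        p j ∈ ({-(π / 2), 0, π / 2} : Set ℝ) ∨ (p j = π ∨ p j = π / 2 * 3) := by
      have h := hin j (Finset.mem_insert_self j T)
      simp only [Set.mem_insert_iff, Set.mem_singleton_iff] at h ⊢
      tauto
    · refine ih hp (fun k hkT => ?_) hinT
      rcases eq_or_ne k j with rfl | hkj
      exacts [hpj, houtT k hkT hkj]
    · have hpj0 : p j ≠ 0 := by rcases hpj with h | h <;> rw [h] <;> positivity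
      refine Submodule.span_le.mpr ?_ (Kfun_mem_span_update (j := j) hpj)
      rintro _ ⟨t, ht, rfl⟩
      refine ih (update_mem_Iset hp hpj0 t) (fun k hkT => ?_) (fun k hkT => ?_)
      · rcases eq_or_ne k j with rfl | hkj
        · rwa [update_self]
        · rw [update_of_ne hkj]
          exact houtT k hkT hkj
      · rw [update_of_ne (ne_of_mem_of_not_mem hkT hjT)]
        exact hinT k hkT

theorem Kp_in_span_of_grid3_general (m : ℕ) (d : ℕ)
    (p : Fin m → ℝ) (hp : p ∈ grid4 m ∩ Iset m d) :
    Kfun m p ∈ Submodule.span ℝ (Kfun m '' (grid3 m ∩ Iset m d)) := by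
  obtain ⟨⟨s, rfl⟩, hI⟩ := hp
  refine Kfun_mem_span_grid3_of_finset Finset.univ hI (by simp) fun j _ => ?_
  simp only [pt4]
  generalize s j = i
  fin_cases i <;> norm_num

/-- for `p ∈ ((π/2)·{0,1,2,3}^m) ∩ I_d`, the function `K_p` lies in
`span_ℝ{K_q : q ∈ ((π/2)·{-1,0,1}^m) ∩ I_d}`. -/
theorem Kp_in_span_of_grid3 (m : ℕ) (hm : 0 < m) (d : ℕ) (hd : d ≤ m)
    (p : Fin m → ℝ) (hp : p ∈ grid4 m ∩ Iset m d) :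
    Kfun m p ∈ Submodule.span ℝ (Kfun m '' (grid3 m ∩ Iset m d)) :=
  Kp_in_span_of_grid3_general m d p hp
end
end

section
/- For every g ∈ H, the expansion g = (π/2)^m · Σ_{p ∈ (π/2)·{0,1,2,3}^m} ⟨g, K_p⟩_H · K_p holds, where the sum runs over all 4^m points p of the grid (π/2)·{0,1,2,3}^m. -/
open scoped Real BigOperators
open MeasureTheory Filter

/-!
Both the Lebesgue measure on `[-π,π]^m` and the counting measure on the grid `(π/2)·{0,1,2,3}^m`
integrate `e^{i k·x}` to `C·[k = 0]` for every frequency `k` with `|k_j| ≤ 2`, with `C = (2π)^m`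
and `C = 4^m` respectively: coordinatewise this is the orthogonality of `e^{ikt}` on `[-π,π]`, and
the vanishing of `Σ_{t<4} i^{kt}` for `k ∈ {±1, ±2}`. Since `g·K_y` expands into exponentials
`e^{i(ω'-ω)·x}` with `ω, ω' ∈ {-1,0,1}^m`, every such measure gives `∫ g K_y = C (2π)^{-m} g(y)`.
For the Lebesgue measure this is the reproducing property `⟨g, K_p⟩_H = g(p)`; for the grid, using
`K(p,z) = K(z,p)`, it evaluates the sum as `4^m (2π)^{-m} g(z) = (π/2)^{-m} g(z)`.
-/

open Complex

theorem prod_ite_eq_zero_pow {ι α M : Type*} [Fintype ι] [DecidableEq α] [Zero α]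
    [CommMonoidWithZero M] (k : ι → α) (a : M) :
    ∏ j, (if k j = 0 then a else 0) = if k = 0 then a ^ Fintype.card ι else 0 := by
  simp [Finset.prod_ite_zero, funext_iff]

theorem integral_Icc_exp_I_int_mul (n : ℤ) :
    ∫ t in Set.Icc (-π) π, exp (I * n * t) = if n = 0 then (2 * π : ℂ) else 0 := by
  rw [integral_Icc_eq_integral_Ioc, ← intervalIntegral.integral_of_le (by linarith [Real.pi_pos])]
  split_ifs with hn
  · simp only [hn, Int.cast_zero, mul_zero, zero_mul, exp_zero, intervalIntegral.integral_const,
      sub_neg_eq_add, real_smul, mul_one]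
    push_cast
    ring
  · have hc : I * n ≠ 0 := mul_ne_zero I_ne_zero (Int.cast_ne_zero.2 hn)
    have hperiod : I * n * π = I * n * (-π : ℝ) + n * (2 * π * I) := by push_cast; ring
    rw [integral_exp_mul_complex hc, hperiod, exp_add, exp_int_mul_two_pi_mul_I, mul_one,
      sub_self, zero_div]

theorem sum_exp_two_pi_I_int_mul_div {N : ℕ} (hN : N ≠ 0) (k : ℤ) :
    ∑ t : Fin N, exp (2 * π * I * k * (t : ℕ) / N) = if (N : ℤ) ∣ k then (N : ℂ) else 0 := by
  have hζ := isPrimitiveRoot_exp N hN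
  have hr : ∀ t : ℕ, exp (2 * π * I * k * t / N) = (exp (2 * π * I / N) ^ k) ^ t := fun t => by
    rw [← exp_int_mul, ← exp_nat_mul]
    ring_nf
  simp only [hr, Fin.sum_univ_eq_sum_range (fun t => (exp (2 * π * I / N) ^ k) ^ t)]
  split_ifs with hk
  · simp [(hζ.zpow_eq_one_iff_dvd k).2 hk]
  · have hr1 : exp (2 * π * I / N) ^ k ≠ 1 := mt (hζ.zpow_eq_one_iff_dvd k).1 hk
    have hrN : (exp (2 * π * I / N) ^ k) ^ N = 1 := by
      rw [← zpow_natCast, ← zpow_mul, mul_comm k, zpow_mul, zpow_natCast, hζ.pow_eq_one, one_zpow]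
    rw [geom_sum_eq hr1, hrN, sub_self, zero_div]

theorem integral_fintype_sum_dirac {ι α E : Type*} [Fintype ι] [MeasurableSpace α]
    [MeasurableSingletonClass α] [NormedAddCommGroup E] [NormedSpace ℝ E] [CompleteSpace E]
    (p : ι → α) (f : α → E) :
    ∫ x, f x ∂(∑ i, Measure.dirac (p i)) = ∑ i, f (p i) := by
  rw [integral_finsetSum_measure fun i _ => integrable_dirac enorm_lt_top]
  simp only [integral_dirac]

noncomputable def expDot {m : ℕ} (k : Fin m → ℤ) (x : Fin m → ℝ) : ℂ := exp (I * (dotZ k x : ℝ))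

theorem expDot_eq_prod {m : ℕ} (k : Fin m → ℤ) (x : Fin m → ℝ) :
    expDot k x = ∏ j, exp (I * k j * x j) := by
  simp only [expDot, dotZ, ← exp_sum, ofReal_sum, ofReal_mul, ofReal_intCast, Finset.mul_sum,
    mul_assoc]

theorem expDot_mul_expDot_sub {m : ℕ} (ω ω' : Fin m → ℤ) (x y : Fin m → ℝ) :
    expDot ω' x * expDot ω (y - x) = expDot ω y * expDot (ω' - ω) x := by
  simp only [expDot, dotZ, ← exp_add, Pi.sub_apply, Int.cast_sub, mul_sub, sub_mul,
    Finset.sum_sub_distrib, ofReal_sub]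
  ring_nf

theorem continuous_expDot {m : ℕ} (k : Fin m → ℤ) : Continuous (expDot k) := by
  unfold expDot dotZ
  fun_prop

theorem norm_expDot {m : ℕ} (k : Fin m → ℤ) (x : Fin m → ℝ) : ‖expDot k x‖ = 1 := by
  rw [expDot, mul_comm, norm_exp_ofReal_mul_I]

theorem integrable_expDot {m : ℕ} (μ : Measure (Fin m → ℝ)) [IsFiniteMeasure μ]
    (k : Fin m → ℤ) : Integrable (expDot k) μ :=
  .of_bound (continuous_expDot k).aestronglyMeasurable 1
    (ae_of_all _ fun x => (norm_expDot k x).le)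

theorem Kker_comm (m : ℕ) (x z : Fin m → ℝ) : Kker m x z = Kker m z x := by
  have h : ∀ ω : Fin m → ℤ, exp (I * (dotZ ω (z - x) : ℝ))
      = (starRingEnd ℂ) (exp (I * (dotZ ω (x - z) : ℝ))) := fun ω => by
    rw [← exp_conj, map_mul, conj_I, conj_ofReal]
    simp only [dotZ, Pi.sub_apply, mul_sub, Finset.sum_sub_distrib, ofReal_sub, ofReal_sum,
      ofReal_mul, ofReal_intCast]
    ring_nf
  simp only [Kker, h, ← map_sum, conj_re]

theorem abs_sub_le_two_of_mem_Omega {m : ℕ} {ω ω' : Fin m → ℤ} (hω : ω ∈ Omega m)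
    (hω' : ω' ∈ Omega m) (j : Fin m) : |(ω' - ω) j| ≤ 2 := by
  simp only [Omega, Fintype.mem_piFinset, Finset.mem_insert, Finset.mem_singleton] at hω hω'
  have := hω j
  have := hω' j
  rw [Pi.sub_apply, abs_le]
  omega

theorem mul_Kker_eq {m : ℕ} {g : (Fin m → ℝ) → ℝ} {c : (Fin m → ℤ) → ℂ}
    (hc : ∀ z, (g z : ℂ) = ∑ ω ∈ Omega m, c ω * expDot ω z) (y x : Fin m → ℝ) :
    g x * Kker m y x = ((2 * π) ^ m)⁻¹ *
      (∑ ω' ∈ Omega m, ∑ ω ∈ Omega m, c ω' * expDot ω y * expDot (ω' - ω) x).re := by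
  have h : (g x : ℂ) * ∑ ω ∈ Omega m, expDot ω (y - x)
      = ∑ ω' ∈ Omega m, ∑ ω ∈ Omega m, c ω' * expDot ω y * expDot (ω' - ω) x := by
    simp only [hc x, Finset.sum_mul_sum, mul_assoc, expDot_mul_expDot_sub]
  rw [Kker, ← h, re_ofReal_mul]
  exact mul_left_comm _ _ _

theorem integral_mul_Kker {m : ℕ} (μ : Measure (Fin m → ℝ)) [IsFiniteMeasure μ] (C : ℝ)
    (hμ : ∀ k : Fin m → ℤ, (∀ j, |k j| ≤ 2) → ∫ x, expDot k x ∂μ = if k = 0 then (C : ℂ) else 0)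
    {g : (Fin m → ℝ) → ℝ} (hg : g ∈ Hset m) (y : Fin m → ℝ) :
    ∫ x, g x * Kker m y x ∂μ = C / (2 * π) ^ m * g y := by
  obtain ⟨c, -, hc⟩ := hg
  have hintegrable : ∀ (a : ℂ) k, Integrable (fun x => a * expDot k x) μ :=
    fun a k => (integrable_expDot μ k).const_mul a
  have hcollapse : ∀ ω' ∈ Omega m,
      ∑ ω ∈ Omega m, ∫ x, c ω' * expDot ω y * expDot (ω' - ω) x ∂μ = C * (c ω' * expDot ω' y) := by
    intro ω' hω'
    rw [Finset.sum_eq_single_of_mem ω' hω']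
    · rw [integral_const_mul, sub_self, hμ 0 (by simp), if_pos rfl, mul_comm]
    · intro ω hω hne
      rw [integral_const_mul, hμ _ (abs_sub_le_two_of_mem_Omega hω hω'),
        if_neg (sub_ne_zero.2 hne.symm), mul_zero]
  set F : (Fin m → ℝ) → ℂ :=
    fun x => ∑ ω' ∈ Omega m, ∑ ω ∈ Omega m, c ω' * expDot ω y * expDot (ω' - ω) x
  have hF : Integrable F μ :=
    integrable_finsetSum _ fun ω' _ => integrable_finsetSum _ fun ω _ => hintegrable _ _
  have hFint : ∫ x, F x ∂μ = C * g y := by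
    rw [integral_finsetSum _ fun ω' _ => integrable_finsetSum _ fun ω _ => hintegrable _ _]
    simp only [integral_finsetSum _ fun ω _ => hintegrable _ _]
    rw [Finset.sum_congr rfl hcollapse, ← Finset.mul_sum, hc y]
    rfl
  have hre : ∫ x, (F x).re ∂μ = (∫ x, F x ∂μ).re := by
    simpa only [RCLike.re_to_complex] using integral_re hF
  calc ∫ x, g x * Kker m y x ∂μ = ∫ x, ((2 * π) ^ m)⁻¹ * (F x).re ∂μ := by
        simp only [mul_Kker_eq hc y, F]
    _ = C / (2 * π) ^ m * g y := by
        rw [integral_const_mul, hre, hFint, re_ofReal_mul, ofReal_re]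
        ring

theorem integral_box_expDot {m : ℕ} (k : Fin m → ℤ) :
    ∫ x in box m, expDot k x = if k = 0 then (2 * π : ℂ) ^ m else 0 := by
  simp only [expDot_eq_prod, box, volume_pi, Measure.restrict_pi_pi]
  rw [integral_fintype_prod_eq_prod (fun j (t : ℝ) => exp (I * k j * t))]
  simp only [integral_Icc_exp_I_int_mul, prod_ite_eq_zero_pow, Fintype.card_fin]

theorem sum_grid4_expDot {m : ℕ} (k : Fin m → ℤ) (hk : ∀ j, |k j| ≤ 2) :
    ∑ s : Fin m → Fin 4, expDot k (pt4 m s) = if k = 0 then (4 : ℂ) ^ m else 0 := by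
  have hfactor : ∀ (s : Fin m → Fin 4) j,
      exp (I * k j * (pt4 m s j : ℝ)) = exp (2 * π * I * k j * (s j : ℕ) / 4) :=
    fun s j => by
      simp only [pt4]
      push_cast
      ring_nf
  have hdvd : ∀ j, (4 : ℤ) ∣ k j ↔ k j = 0 := fun j => by
    have := abs_le.1 (hk j)
    omega
  have hsum := sum_exp_two_pi_I_int_mul_div (N := 4) four_ne_zero
  simp only [Nat.cast_ofNat] at hsum
  simp only [expDot_eq_prod, hfactor]
  rw [← Fintype.prod_sum (fun j (t : Fin 4) => exp (2 * π * I * k j * (t : ℕ) / 4))]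
  simp only [hsum, hdvd, prod_ite_eq_zero_pow, Fintype.card_fin]

instance isFiniteMeasure_restrict_box (m : ℕ) : IsFiniteMeasure (volume.restrict (box m)) :=
  isFiniteMeasure_restrict.2 (isCompact_univ_pi fun _ => isCompact_Icc).measure_lt_top.ne

theorem innerH_Kfun {m : ℕ} {g : (Fin m → ℝ) → ℝ} (hg : g ∈ Hset m) (p : Fin m → ℝ) :
    innerH m g (Kfun m p) = g p := by
  have hbox := integral_mul_Kker (volume.restrict (box m)) ((2 * π) ^ m)
    (fun k _ => by exact_mod_cast integral_box_expDot k) hg p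
  rwa [div_self (pow_ne_zero m (by positivity)), one_mul] at hbox

theorem expansion_over_grid4_general (m : ℕ)
    (g : (Fin m → ℝ) → ℝ) (hg : g ∈ Hset m) :
    g = (Real.pi / 2) ^ m •
      ∑ s : Fin m → Fin 4, innerH m g (Kfun m (pt4 m s)) • Kfun m (pt4 m s) := by
  funext z
  have hgrid := integral_mul_Kker (∑ s, Measure.dirac (pt4 m s)) (4 ^ m)
    (fun k hk => by simp [integral_fintype_sum_dirac, sum_grid4_expDot k hk]) hg z
  rw [integral_fintype_sum_dirac] at hgrid
  simp only [Pi.smul_apply, Finset.sum_apply, smul_eq_mul, innerH_Kfun hg, Kfun, Kker_comm _ _ z,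
    hgrid]
  have hpi : (π / 2) ^ m * 4 ^ m = (2 * π) ^ m := by rw [← mul_pow]; ring
  rw [← mul_assoc, ← mul_div_assoc, hpi, div_self (by positivity), one_mul]

/-- for every `g ∈ H`,
`g = (π/2)^m Σ_{p ∈ (π/2)·{0,1,2,3}^m} ⟨g, K_p⟩_H K_p`, the sum running over all
`4^m` grid points. -/
theorem expansion_over_grid4 (m : ℕ) (hm : 0 < m)
    (g : (Fin m → ℝ) → ℝ) (hg : g ∈ Hset m) :
    g = (Real.pi / 2) ^ m •
      ∑ s : Fin m → Fin 4, innerH m g (Kfun m (pt4 m s)) • Kfun m (pt4 m s) :=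
  expansion_over_grid4_general m g hg
end
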